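/- Let 𝒜 ⊂ ℝ^2 be a measurable set with 0 < |𝒜| < ∞, let λ > 0, let α > 0, let s > 0, and fix a receiver location y ∈ ℝ^2. Let N ~ Poisson(λ|𝒜|), let X_1, X_2, … be i.i.d. uniform on 𝒜 independent of N, let f_1, f_2, … and h be i.i.d. with the exponential distribution of rate 1, all mutually independent. Then the decoding probability satisfies 𝒫(h ≥ s · Σ_{j=1}^N f_j ‖X_j − y‖^{−α}) = exp(−λ ∫_𝒜 (1 − 1/(1 + s‖x − y‖^{−α})) dx), where ‖x − y‖^{−α} is interpreted as +∞ (so the integrand equals 1) when x = y. -/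

import Mathlib

open MeasureTheory ProbabilityTheory
open scoped Classical

/-- A real random variable is `Exp(1)`: `P(X ≥ x) = exp (−x)` for all `x ≥ 0`. -/
def IsExpOne {Ω : Type*} [MeasurableSpace Ω] (μ : Measure Ω) (X : Ω → ℝ) : Prop :=
  ∀ x : ℝ, 0 ≤ x → μ {ω | x ≤ X ω} = ENNReal.ofReal (Real.exp (-x))

/-- Index type for the family: signal fading `h`, Poisson count `N`, interferer
positions `X j`, and interferer fading gains `f j`. -/
inductive SinrIdx where
  | h : SinrIdx
  | N : SinrIdx
  | X : ℕ → SinrIdx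
  | f : ℕ → SinrIdx

/-- Codomains of the family members. -/
def SinrIdx.type : SinrIdx → Type
  | .h => ℝ
  | .N => ℕ
  | .X _ => EuclideanSpace ℝ (Fin 2)
  | .f _ => ℝ

instance : ∀ i : SinrIdx, MeasurableSpace i.type
  | .h => inferInstanceAs (MeasurableSpace ℝ)
  | .N => inferInstanceAs (MeasurableSpace ℕ)
  | .X _ => inferInstanceAs (MeasurableSpace (EuclideanSpace ℝ (Fin 2)))
  | .f _ => inferInstanceAs (MeasurableSpace ℝ)

/-- The family `(h, N, X 0, X 1, …, f 0, f 1, …)`. -/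
def SinrIdx.fam {Ω : Type*} (h : Ω → ℝ) (N : Ω → ℕ)
    (X : ℕ → Ω → EuclideanSpace ℝ (Fin 2)) (f : ℕ → Ω → ℝ) :
    ∀ i : SinrIdx, Ω → i.type
  | .h => h
  | .N => N
  | .X j => X j
  | .f j => f j

open Real Set
open scoped ENNReal

noncomputable def expNeg (t : ℝ≥0∞) : ℝ≥0∞ :=
  if t = ∞ then 0 else ENNReal.ofReal (Real.exp (-t.toReal))

@[simp] lemma expNeg_top : expNeg ∞ = 0 := if_pos rfl

lemma expNeg_ne_top (t : ℝ≥0∞) (ht : t ≠ ∞) : expNeg t = ENNReal.ofReal (Real.exp (-t.toReal)) :=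
  if_neg ht

@[simp] lemma expNeg_zero : expNeg 0 = 1 := by simp [expNeg]

lemma measurable_expNeg : Measurable expNeg := by
  apply Measurable.ite (MeasurableSet.singleton ∞) measurable_const
  exact ENNReal.measurable_ofReal.comp ((ENNReal.measurable_toReal.neg).exp)

lemma expNeg_add (a b : ℝ≥0∞) : expNeg (a + b) = expNeg a * expNeg b := by
  rcases eq_or_ne a ∞ with ha | ha
  · simp [ha, top_add]
  rcases eq_or_ne b ∞ with hb | hb
  · simp [hb, add_top]
  rw [expNeg_ne_top _ ha, expNeg_ne_top _ hb, expNeg_ne_top _ (by finiteness),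
    ENNReal.toReal_add ha hb, neg_add, Real.exp_add, ENNReal.ofReal_mul (exp_nonneg _)]

lemma expNeg_sum {ι : Type*} (s : Finset ι) (g : ι → ℝ≥0∞) :
    expNeg (∑ i ∈ s, g i) = ∏ i ∈ s, expNeg (g i) := by
  classical
  induction s using Finset.induction with
  | empty => simp
  | insert _ _ hx ih => rw [Finset.sum_insert hx, Finset.prod_insert hx, expNeg_add, ih]


lemma measure_le_ofReal_eq_lintegral_expNeg {Ω : Type*} [MeasurableSpace Ω] (μ : Measure Ω)
    [IsProbabilityMeasure μ] {h : Ω → ℝ} {T : Ω → ℝ≥0∞} (hh : Measurable h) (hT : Measurable T)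
    (hExp : IsExpOne μ h) (hInd : IndepFun T h μ) :
    μ {ω | T ω ≤ ENNReal.ofReal (h ω)} = ∫⁻ ω, expNeg (T ω) ∂μ := by
  have hmapfin : ∀ t : ℝ≥0∞, μ.map h {x | t ≤ ENNReal.ofReal x} = expNeg t := by
    intro t
    rcases eq_or_ne t ∞ with ht | ht
    · have : {x : ℝ | t ≤ ENNReal.ofReal x} = ∅ := by
        ext x; simp [ht, top_le_iff, ENNReal.ofReal_ne_top]
      simp [this, ht, expNeg]
    · have hset : {x : ℝ | t ≤ ENNReal.ofReal x} = {x : ℝ | t.toReal ≤ x} ∪ {x | t = 0 ∧ x < t.toReal} := by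
        ext x
        rcases le_or_gt t.toReal x with hx | hx
        · simp only [mem_setOf_eq, mem_union]
          constructor
          · intro _; exact Or.inl hx
          · intro _
            calc t = ENNReal.ofReal t.toReal := (ENNReal.ofReal_toReal ht).symm
            _ ≤ ENNReal.ofReal x := ENNReal.ofReal_le_ofReal hx
        · simp only [mem_setOf_eq, mem_union, not_le.2 hx, false_or]
          constructor
          · intro hle
            constructor
            · by_contra h0
              have htpos : 0 < t := pos_iff_ne_zero.2 h0
              rcases le_or_gt x 0 with hx0 | hx0
              · rw [ENNReal.ofReal_eq_zero.2 hx0] at hle; exact h0 (le_antisymm (le_of_le_of_eq hle rfl) zero_le)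
              · exact absurd ((ENNReal.le_ofReal_iff_toReal_le ht hx0.le).1 hle) (not_le.2 hx)
            · exact hx
          · rintro ⟨h0, _⟩; simp [h0]
      rcases eq_or_ne t 0 with h0 | h0
      · have : {x : ℝ | t ≤ ENNReal.ofReal x} = univ := by ext x; simp [h0]
        rw [this]
        have : IsProbabilityMeasure (μ.map h) := Measure.isProbabilityMeasure_map hh.aemeasurable
        simp [expNeg, h0]
      · have hset2 : {x : ℝ | t ≤ ENNReal.ofReal x} = {x : ℝ | t.toReal ≤ x} := by
          rw [hset]; simp [h0]
        have : {x : ℝ | t.toReal ≤ x} = Ici t.toReal := rfl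
        rw [hset2, this, Measure.map_apply hh measurableSet_Ici, expNeg_ne_top _ ht]
        have : h ⁻¹' Ici t.toReal = {ω | t.toReal ≤ h ω} := rfl
        rw [this]
        exact hExp _ (ENNReal.toReal_nonneg)
  have hjoint : μ.map (fun ω => (T ω, h ω)) = (μ.map T).prod (μ.map h) :=
    (indepFun_iff_map_prod_eq_prod_map_map hT.aemeasurable hh.aemeasurable).1 hInd
  have hSmeas : MeasurableSet {p : ℝ≥0∞ × ℝ | p.1 ≤ ENNReal.ofReal p.2} :=
    measurableSet_le measurable_fst (ENNReal.measurable_ofReal.comp measurable_snd)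
  have : μ {ω | T ω ≤ ENNReal.ofReal (h ω)} =
      μ.map (fun ω => (T ω, h ω)) {p : ℝ≥0∞ × ℝ | p.1 ≤ ENNReal.ofReal p.2} := by
    rw [Measure.map_apply (hT.prodMk hh) hSmeas]; rfl
  rw [this, hjoint, Measure.prod_apply hSmeas]
  have : ∀ t : ℝ≥0∞, μ.map h (Prod.mk t ⁻¹' {p : ℝ≥0∞ × ℝ | p.1 ≤ ENNReal.ofReal p.2}) = expNeg t := by
    intro t; exact hmapfin t
  rw [lintegral_congr this, lintegral_map measurable_expNeg hT]

lemma lintegral_Ioi_exp_neg_mul {b : ℝ} (hb : 0 < b) :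
    ∫⁻ v in Ioi (0:ℝ), ENNReal.ofReal (Real.exp (-(b * v))) = ENNReal.ofReal b⁻¹ := by
  have hint : IntegrableOn (fun x => Real.exp (-(b * x))) (Ioi (0:ℝ)) := by
    simpa [neg_mul] using exp_neg_integrableOn_Ioi 0 hb
  rw [← ofReal_integral_eq_lintegral_ofReal hint
    (Filter.Eventually.of_forall fun x => (exp_nonneg _))]
  congr 1
  have := integral_comp_mul_left_Ioi (fun x => Real.exp (-x)) 0 hb
  simp only [mul_zero] at this
  rw [this, integral_exp_neg_Ioi, neg_zero, exp_zero, smul_eq_mul, mul_one]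

/-- The exponential(1) measure determined by its CCDF. -/
lemma measure_eq_expDensity (ν : Measure ℝ) [IsProbabilityMeasure ν]
    (hν : ∀ x : ℝ, 0 ≤ x → ν (Ici x) = ENNReal.ofReal (Real.exp (-x))) :
    ν = (volume.restrict (Ioi (0:ℝ))).withDensity fun x => ENNReal.ofReal (Real.exp (-x)) := by
  set e : Measure ℝ := (volume.restrict (Ioi (0:ℝ))).withDensity fun x => ENNReal.ofReal (Real.exp (-x)) with he
  have hmeas : Measurable fun x : ℝ => ENNReal.ofReal (Real.exp (-x)) :=
    ENNReal.measurable_ofReal.comp (measurable_id.neg.exp)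
  have he_Ici : ∀ a : ℝ, e (Ici a) = ENNReal.ofReal (Real.exp (-(max a 0))) := by
    intro a
    rw [he, withDensity_apply _ measurableSet_Ici, Measure.restrict_restrict measurableSet_Ici]
    have hsub : volume.restrict (Ici a ∩ Ioi 0) = volume.restrict (Ioi (max a 0)) := by
      rcases le_or_gt a 0 with ha | ha
      · rw [max_eq_right ha]
        congr 1
        ext x; simp only [mem_inter_iff, mem_Ici, mem_Ioi]
        constructor
        · rintro ⟨_, hx⟩; exact hx
        · intro hx; exact ⟨le_trans ha hx.le, hx⟩
      · rw [max_eq_left ha.le]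
        have : Ici a ∩ Ioi 0 = Ici a := by
          ext x; simp only [mem_inter_iff, mem_Ici, mem_Ioi]
          exact ⟨fun h => h.1, fun h => ⟨h, lt_of_lt_of_le ha h⟩⟩
        rw [this, ← restrict_Ioi_eq_restrict_Ici]
    rw [hsub]
    have h1 : ∫⁻ x in Ioi (max a 0), ENNReal.ofReal (Real.exp (-x)) = ENNReal.ofReal (Real.exp (-(max a 0))) := by
      have hint : IntegrableOn (fun x => Real.exp (-x)) (Ioi (max a 0)) := by
        simpa using exp_neg_integrableOn_Ioi (max a 0) one_pos
      rw [← ofReal_integral_eq_lintegral_ofReal hint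
        (Filter.Eventually.of_forall fun x => (exp_nonneg _)), integral_exp_neg_Ioi]
    exact h1
  have hν_Ici : ∀ a : ℝ, ν (Ici a) = ENNReal.ofReal (Real.exp (-(max a 0))) := by
    intro a
    rcases le_or_gt 0 a with ha | ha
    · rw [max_eq_left ha]; exact hν a ha
    · rw [max_eq_right ha.le]
      have h1 : ν (Ici (0:ℝ)) = 1 := by
        rw [hν 0 le_rfl]; simp
      have : ν (Ici a) = 1 := le_antisymm (prob_le_one) (h1 ▸ measure_mono (Ici_subset_Ici.2 ha.le))
      rw [this]; simp
  exact Measure.ext_of_Ici ν e (fun a => by rw [he_Ici, hν_Ici])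

lemma lintegral_expNeg_mul (ν : Measure ℝ) [IsProbabilityMeasure ν]
    (hν : ∀ x : ℝ, 0 ≤ x → ν (Ici x) = ENNReal.ofReal (Real.exp (-x))) (c : ℝ≥0∞) :
    ∫⁻ v, expNeg (c * ENNReal.ofReal v) ∂ν = (1 + c)⁻¹ := by
  have hmeas : Measurable fun x : ℝ => ENNReal.ofReal (Real.exp (-x)) :=
    ENNReal.measurable_ofReal.comp (measurable_id.neg.exp)
  have hg : Measurable fun v : ℝ => expNeg (c * ENNReal.ofReal v) :=
    measurable_expNeg.comp ((measurable_const.mul ENNReal.measurable_ofReal))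
  rw [measure_eq_expDensity ν hν,
    lintegral_withDensity_eq_lintegral_mul _ hmeas hg]
  rcases eq_or_ne c ∞ with hc | hc
  · have : ∀ v ∈ Ioi (0:ℝ),
        ((fun x => ENNReal.ofReal (Real.exp (-x))) * fun v => expNeg (c * ENNReal.ofReal v)) v = 0 := by
      intro v hv
      have : c * ENNReal.ofReal v = ∞ := by
        rw [hc]; exact ENNReal.top_mul (by simp [ENNReal.ofReal_pos.2 hv, ne_of_gt])
      simp [this, expNeg]
    rw [setLIntegral_congr_fun measurableSet_Ioi this]
    simp [hc]
  · set a := c.toReal with ha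
    have hc' : c = ENNReal.ofReal a := (ENNReal.ofReal_toReal hc).symm
    have key : ∀ v ∈ Ioi (0:ℝ),
        ((fun x => ENNReal.ofReal (Real.exp (-x))) * fun v => expNeg (c * ENNReal.ofReal v)) v
          = ENNReal.ofReal (Real.exp (-((a + 1) * v))) := by
      intro v hv
      have hfin : c * ENNReal.ofReal v ≠ ∞ := ENNReal.mul_ne_top hc ENNReal.ofReal_ne_top
      have htoReal : (c * ENNReal.ofReal v).toReal = a * v := by
        rw [ENNReal.toReal_mul, ENNReal.toReal_ofReal (le_of_lt hv)]
      simp only [Pi.mul_apply]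
      rw [expNeg_ne_top _ hfin, htoReal, ← ENNReal.ofReal_mul (exp_nonneg _), ← Real.exp_add]
      congr 2
      ring
    rw [setLIntegral_congr_fun measurableSet_Ioi key,
      lintegral_Ioi_exp_neg_mul (by positivity : (0:ℝ) < a + 1)]
    rw [hc', ← ENNReal.ofReal_one, ← ENNReal.ofReal_add zero_le_one ENNReal.toReal_nonneg,
      ← ENNReal.ofReal_inv_of_pos (by positivity)]
    congr 1
    rw [add_comm]


section SingleTerm
variable {Ω : Type*} [MeasurableSpace Ω]

lemma lintegral_expNeg_single (μ : Measure Ω) [IsProbabilityMeasure μ]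
    {E : Type*} [MeasurableSpace E] {Xj : Ω → E} {fj : Ω → ℝ}
    (hX : Measurable Xj) (hf : Measurable fj)
    (hExp : IsExpOne μ fj) (hInd : IndepFun Xj fj μ)
    {c : E → ℝ≥0∞} (hc : Measurable c) :
    ∫⁻ ω, expNeg (c (Xj ω) * ENNReal.ofReal (fj ω)) ∂μ
      = ∫⁻ x, (1 + c x)⁻¹ ∂(μ.map Xj) := by
  have hjoint : μ.map (fun ω => (Xj ω, fj ω)) = (μ.map Xj).prod (μ.map fj) :=
    (indepFun_iff_map_prod_eq_prod_map_map hX.aemeasurable hf.aemeasurable).1 hInd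
  have hG : Measurable fun p : E × ℝ => expNeg (c p.1 * ENNReal.ofReal p.2) :=
    measurable_expNeg.comp ((hc.comp measurable_fst).mul
      (ENNReal.measurable_ofReal.comp measurable_snd))
  have h1 : ∫⁻ ω, expNeg (c (Xj ω) * ENNReal.ofReal (fj ω)) ∂μ
      = ∫⁻ p : E × ℝ, expNeg (c p.1 * ENNReal.ofReal p.2) ∂(μ.map (fun ω => (Xj ω, fj ω))) := by
    rw [lintegral_map hG (hX.prodMk hf)]
  rw [h1, hjoint, lintegral_prod _ hG.aemeasurable]
  have : IsProbabilityMeasure (μ.map fj) := Measure.isProbabilityMeasure_map hf.aemeasurable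
  have hccdf : ∀ x : ℝ, 0 ≤ x → (μ.map fj) (Set.Ici x) = ENNReal.ofReal (Real.exp (-x)) := by
    intro x hx
    rw [Measure.map_apply hf measurableSet_Ici]
    exact hExp x hx
  exact lintegral_congr fun x => lintegral_expNeg_mul (μ.map fj) hccdf (c x)

end SingleTerm

section Helpers
open MeasureTheory ProbabilityTheory Real Set
open scoped ENNReal

lemma ProbabilityTheory.Indep.mono'' {Ω : Type*} {mΩ : MeasurableSpace Ω} {μ : Measure Ω}
    {m₁ m₂ m₁' m₂' : MeasurableSpace Ω}
    (hInd : ProbabilityTheory.Indep m₁ m₂ μ) (h1 : m₁' ≤ m₁) (h2 : m₂' ≤ m₂) :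
    ProbabilityTheory.Indep m₁' m₂' μ := by
  rw [ProbabilityTheory.Indep_iff] at hInd ⊢
  exact fun t1 t2 ht1 ht2 => hInd t1 t2 (h1 _ ht1) (h2 _ ht2)

lemma indep_meas_inter {Ω : Type*} {mΩ : MeasurableSpace Ω} {μ : Measure Ω}
    {m₁ m₂ : MeasurableSpace Ω} (hInd : ProbabilityTheory.Indep m₁ m₂ μ) {s t : Set Ω}
    (hs : MeasurableSet[m₁] s) (ht : MeasurableSet[m₂] t) : μ (s ∩ t) = μ s * μ t :=
  (ProbabilityTheory.Indep_iff _ _ _).1 hInd s t hs ht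

lemma indepFun_of_measurable_le {Ω β γ : Type*} {mΩ : MeasurableSpace Ω} [MeasurableSpace β]
    [MeasurableSpace γ] {μ : Measure Ω} {m₁ m₂ : MeasurableSpace Ω}
    (hInd : ProbabilityTheory.Indep m₁ m₂ μ) {g₁ : Ω → β} {g₂ : Ω → γ}
    (h₁ : Measurable[m₁] g₁) (h₂ : Measurable[m₂] g₂) :
    ProbabilityTheory.IndepFun g₁ g₂ μ := by
  rw [ProbabilityTheory.IndepFun_iff_Indep]
  exact hInd.mono'' (measurable_iff_comap_le.1 h₁) (measurable_iff_comap_le.1 h₂)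

end Helpers

open MeasureTheory ProbabilityTheory Real Set
open scoped ENNReal

/-- Finite-window form of Theorem 1: with interferers forming a Poisson point
process of density `λ` on `𝒜 ⊆ ℝ²`, i.i.d. unit-rate exponential fading gains
`f j`, signal fading `h ~ Exp(1)`, path-loss exponent `α` and threshold
factor `s`, the decoding probability equals
`exp (−λ ∫_𝒜 (1 − 1/(1 + s ‖x − y‖^(−α))) dx)`.  The interference sum is
computed in `ℝ≥0∞`, so `‖X j − y‖^(−α) = ∞` when `X j = y`; correspondingly
the integrand is taken to be `1` at `x = y`. -/
theorem ccdf_sinr_poisson_window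
    {Ω : Type*} [MeasurableSpace Ω] (μ : Measure Ω) [IsProbabilityMeasure μ]
    (𝒜 : Set (EuclideanSpace ℝ (Fin 2))) (h𝒜m : MeasurableSet 𝒜)
    (h𝒜pos : 0 < volume 𝒜) (h𝒜fin : volume 𝒜 < ⊤)
    (lam α s : ℝ) (hlam : 0 < lam) (hα : 0 < α) (hs : 0 < s)
    (y : EuclideanSpace ℝ (Fin 2))
    (h : Ω → ℝ) (N : Ω → ℕ) (X : ℕ → Ω → EuclideanSpace ℝ (Fin 2)) (f : ℕ → Ω → ℝ)
    (hmeas : ∀ i, Measurable (SinrIdx.fam h N X f i))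
    (hPoisson : ∀ n : ℕ, μ {ω | N ω = n} =
      ENNReal.ofReal ((lam * (volume 𝒜).toReal) ^ n *
        Real.exp (-(lam * (volume 𝒜).toReal)) / n.factorial))
    (hUnif : ∀ j, μ.map (X j) = (volume 𝒜)⁻¹ • volume.restrict 𝒜)
    (hExph : IsExpOne μ h) (hExpf : ∀ j, IsExpOne μ (f j))
    (hIndep : iIndepFun (SinrIdx.fam h N X f) μ) :
    (μ {ω | ENNReal.ofReal s * ∑ j ∈ Finset.range (N ω),
        ENNReal.ofReal (f j ω) * (ENNReal.ofReal ‖X j ω - y‖) ^ (-α) ≤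
          ENNReal.ofReal (h ω)}).toReal =
      Real.exp (-lam * ∫ x in 𝒜,
        (if x = y then (1 : ℝ) else 1 - 1 / (1 + s * ‖x - y‖ ^ (-α)))) := by
  classical
  have hhm : Measurable h := hmeas .h
  have hNm : Measurable N := hmeas .N
  have hXm : ∀ j, Measurable (X j) := fun j => hmeas (.X j)
  have hfm : ∀ j, Measurable (f j) := fun j => hmeas (.f j)
  -- σ-algebra machinery
  set fam := SinrIdx.fam h N X f with hfam
  let m : SinrIdx → MeasurableSpace Ω := fun i => MeasurableSpace.comap (fam i) inferInstance
  have h_le : ∀ i, m i ≤ ‹MeasurableSpace Ω› := fun i => (hmeas i).comap_le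
  have hiI : iIndep m μ := (iIndepFun_iff_iIndep _ _ _).1 hIndep
  have hSig : ∀ S T : Set SinrIdx, Disjoint S T →
      ProbabilityTheory.Indep (⨆ i ∈ S, m i) (⨆ i ∈ T, m i) μ :=
    fun S T hST => indep_iSup_of_disjoint h_le hiI hST
  have hmem : ∀ (S : Set SinrIdx) (i : SinrIdx), i ∈ S → Measurable[⨆ i ∈ S, m i] (fam i) :=
    fun S i hi => measurable_iff_comap_le.2 (le_biSup m hi)
  -- key functions
  let c : EuclideanSpace ℝ (Fin 2) → ℝ≥0∞ :=
    fun x => ENNReal.ofReal s * (ENNReal.ofReal ‖x - y‖) ^ (-α)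
  have hcm : Measurable c := by
    apply Measurable.const_mul
    exact (ENNReal.measurable_ofReal.comp
      ((measurable_id.sub measurable_const).norm)).pow measurable_const
  let T : ℕ → Ω → ℝ≥0∞ := fun n ω => ENNReal.ofReal s *
    ∑ j ∈ Finset.range n, ENNReal.ofReal (f j ω) * (ENNReal.ofReal ‖X j ω - y‖) ^ (-α)
  have hTrw : ∀ n ω, T n ω = ∑ j ∈ Finset.range n, c (X j ω) * ENNReal.ofReal (f j ω) := by
    intro n ω
    show ENNReal.ofReal s * _ = _
    rw [Finset.mul_sum]
    refine Finset.sum_congr rfl fun j _ => ?_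
    show ENNReal.ofReal s * (ENNReal.ofReal (f j ω) * (ENNReal.ofReal ‖X j ω - y‖) ^ (-α)) =
      ENNReal.ofReal s * (ENNReal.ofReal ‖X j ω - y‖) ^ (-α) * ENNReal.ofReal (f j ω)
    ring
  have hTm : ∀ (m' : MeasurableSpace Ω), (∀ j, Measurable[m'] (X j)) →
      (∀ j, Measurable[m'] (f j)) → ∀ n, Measurable[m'] (T n) := by
    intro m' hX' hf' n
    apply Measurable.const_mul
    apply Finset.measurable_sum
    intro j _
    exact (ENNReal.measurable_ofReal.comp (hf' j)).mul
      ((ENNReal.measurable_ofReal.comp (((hX' j).sub measurable_const).norm)).pow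
        measurable_const)
  let A : ℕ → Set Ω := fun n => {ω | T n ω ≤ ENNReal.ofReal (h ω)}
  have hAm : ∀ n, MeasurableSet (A n) :=
    fun n => measurableSet_le (hTm _ hXm hfm n) (ENNReal.measurable_ofReal.comp hhm)
  -- decomposition
  have hset : {ω | ENNReal.ofReal s * ∑ j ∈ Finset.range (N ω),
        ENNReal.ofReal (f j ω) * (ENNReal.ofReal ‖X j ω - y‖) ^ (-α) ≤
          ENNReal.ofReal (h ω)} = ⋃ n, ({ω | N ω = n} ∩ A n) := by
    ext ω
    simp only [Set.mem_setOf_eq, Set.mem_iUnion, Set.mem_inter_iff]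
    constructor
    · intro hle; exact ⟨N ω, rfl, hle⟩
    · rintro ⟨n, rfl, hle⟩; exact hle
  rw [hset]
  have hdisj : Pairwise (Function.onFun Disjoint fun n => {ω | N ω = n} ∩ A n) := by
    intro i j hij
    refine Set.disjoint_left.2 ?_
    rintro ω ⟨h1, _⟩ ⟨h2, _⟩
    exact hij (h1 ▸ h2)
  rw [measure_iUnion hdisj fun n => ((hNm (measurableSet_singleton n)).inter (hAm n))]
  -- step 1: independence of N and A n
  have hstep1 : ∀ n, μ ({ω | N ω = n} ∩ A n) = μ {ω | N ω = n} * μ (A n) := by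
    intro n
    have hInd := hSig {SinrIdx.N} ({SinrIdx.N}ᶜ) disjoint_compl_right
    refine indep_meas_inter hInd ?_ ?_
    · exact hmem {SinrIdx.N} .N rfl (measurableSet_singleton n)
    · have hX' : ∀ j, Measurable[⨆ i ∈ ({SinrIdx.N}ᶜ : Set SinrIdx), m i] (X j) :=
        fun j => hmem _ (.X j) (by simp)
      have hf' : ∀ j, Measurable[⨆ i ∈ ({SinrIdx.N}ᶜ : Set SinrIdx), m i] (f j) :=
        fun j => hmem _ (.f j) (by simp)
      have hh' : Measurable[⨆ i ∈ ({SinrIdx.N}ᶜ : Set SinrIdx), m i] h :=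
        hmem _ .h (by simp)
      exact measurableSet_le (hTm _ hX' hf' n) (ENNReal.measurable_ofReal.comp hh')
  -- step 2: value of μ (A n)
  have hstep2 : ∀ n, μ (A n) = ∫⁻ ω, expNeg (T n ω) ∂μ := by
    intro n
    refine measure_le_ofReal_eq_lintegral_expNeg μ hhm (hTm _ hXm hfm n) hExph ?_
    have hInd := hSig ({SinrIdx.h}ᶜ) {SinrIdx.h} disjoint_compl_left
    refine indepFun_of_measurable_le hInd ?_ (hmem _ .h rfl)
    exact hTm _ (fun j => hmem _ (.X j) (by simp)) (fun j => hmem _ (.f j) (by simp)) n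
  -- step 3: product structure
  let G : ℕ → Ω → ℝ≥0∞ := fun j ω => expNeg (c (X j ω) * ENNReal.ofReal (f j ω))
  have hGm : ∀ (m' : MeasurableSpace Ω) j, Measurable[m'] (X j) → Measurable[m'] (f j) →
      Measurable[m'] (G j) := by
    intro m' j hX' hf'
    apply measurable_expNeg.comp
    exact ((Measurable.const_mul ((ENNReal.measurable_ofReal.comp
      ((hX'.sub measurable_const).norm)).pow measurable_const) _).mul
      (ENNReal.measurable_ofReal.comp hf'))
  have hexp_prod : ∀ n ω, expNeg (T n ω) = ∏ j ∈ Finset.range n, G j ω := by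
    intro n ω; rw [hTrw, expNeg_sum]
  have hprod : ∀ n, ∫⁻ ω, ∏ j ∈ Finset.range n, G j ω ∂μ
      = ∏ j ∈ Finset.range n, ∫⁻ ω, G j ω ∂μ := by
    intro n
    induction n with
    | zero => simp
    | succ n ih =>
      have hfe : (fun ω => ∏ j ∈ Finset.range (n+1), G j ω)
          = (fun ω => ∏ j ∈ Finset.range n, G j ω) * (G n) := by
        funext ω; exact Finset.prod_range_succ _ _
      -- independence between partial product and last factor
      let Sn : Set SinrIdx := {i | ∃ j, j < n ∧ (i = SinrIdx.X j ∨ i = SinrIdx.f j)}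
      let Tn : Set SinrIdx := {SinrIdx.X n, SinrIdx.f n}
      have hdisjST : Disjoint Sn Tn := by
        rw [Set.disjoint_left]
        rintro i ⟨j, hj, hij⟩ hiT
        rcases hij with rfl | rfl <;> rcases hiT with h' | h' <;>
          simp_all [Tn] <;> omega
      have hP : Measurable[⨆ i ∈ Sn, m i] (fun ω => ∏ j ∈ Finset.range n, G j ω) := by
        apply Finset.measurable_prod
        intro j hj
        rw [Finset.mem_range] at hj
        exact hGm _ j (hmem Sn (.X j) ⟨j, hj, Or.inl rfl⟩) (hmem Sn (.f j) ⟨j, hj, Or.inr rfl⟩)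
      have hQ : Measurable[⨆ i ∈ Tn, m i] (G n) :=
        hGm _ n (hmem Tn (.X n) (Or.inl rfl)) (hmem Tn (.f n) (Or.inr rfl))
      have hIndFun : ProbabilityTheory.IndepFun (fun ω => ∏ j ∈ Finset.range n, G j ω) (G n) μ :=
        indepFun_of_measurable_le (hSig Sn Tn hdisjST) hP hQ
      rw [hfe, lintegral_mul_eq_lintegral_mul_lintegral_of_indepFun
        (Finset.measurable_prod _ fun j _ => hGm _ j (hXm j) (hfm j)) (hGm _ n (hXm n) (hfm n))
        hIndFun, ih, Finset.prod_range_succ]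
  -- step 4: single-term value
  set q : ℝ≥0∞ := (volume 𝒜)⁻¹ * ∫⁻ x in 𝒜, (1 + c x)⁻¹ ∂volume with hqdef
  have hsingle : ∀ j, ∫⁻ ω, G j ω ∂μ = q := by
    intro j
    have hIndXf : ProbabilityTheory.IndepFun (X j) (f j) μ :=
      hIndep.indepFun (show (SinrIdx.X j) ≠ (SinrIdx.f j) by simp)
    rw [lintegral_expNeg_single μ (hXm j) (hfm j) (hExpf j) hIndXf hcm, hUnif j,
      lintegral_smul_measure]
    simp only [smul_eq_mul, hqdef]
  -- assemble: μ E = ∑' n, pmf n * q^n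
  have hsum : ∀ n, μ ({ω | N ω = n} ∩ A n)
      = ENNReal.ofReal ((lam * (volume 𝒜).toReal) ^ n *
          Real.exp (-(lam * (volume 𝒜).toReal)) / n.factorial) * q ^ n := by
    intro n
    rw [hstep1 n, hstep2 n, hPoisson n]
    congr 1
    calc ∫⁻ ω, expNeg (T n ω) ∂μ = ∫⁻ ω, ∏ j ∈ Finset.range n, G j ω ∂μ := by
          refine lintegral_congr fun ω => by rw [hexp_prod]
      _ = ∏ j ∈ Finset.range n, ∫⁻ ω, G j ω ∂μ := hprod n
      _ = ∏ j ∈ Finset.range n, q := Finset.prod_congr rfl fun j _ => hsingle j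
      _ = q ^ n := by rw [Finset.prod_const, Finset.card_range]
  simp_rw [hsum]
  -- identify q with a real integral
  let g0 : EuclideanSpace ℝ (Fin 2) → ℝ := fun x => if x = y then 0 else (1 + s * ‖x - y‖ ^ (-α))⁻¹
  have hgpt : ∀ x, (1 + c x)⁻¹ = ENNReal.ofReal (g0 x) := by
    intro x
    by_cases hxy : x = y
    · have hnorm : ‖x - y‖ = 0 := by simp [hxy]
      have hc : c x = ∞ := by
        show ENNReal.ofReal s * (ENNReal.ofReal ‖x - y‖) ^ (-α) = ∞
        rw [hnorm, ENNReal.ofReal_zero, ENNReal.zero_rpow_of_neg (by linarith), ENNReal.mul_top]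
        simpa using hs
      rw [hc]
      simp [g0, hxy]
    · have hr : 0 < ‖x - y‖ := by
        rw [norm_pos_iff]
        exact sub_ne_zero_of_ne hxy
      have h2 : c x = ENNReal.ofReal (s * ‖x - y‖ ^ (-α)) := by
        show ENNReal.ofReal s * (ENNReal.ofReal ‖x - y‖) ^ (-α) = _
        rw [ENNReal.ofReal_rpow_of_pos hr, ← ENNReal.ofReal_mul hs.le]
      have hpos : (0:ℝ) < 1 + s * ‖x - y‖ ^ (-α) := by positivity
      have : g0 x = (1 + s * ‖x - y‖ ^ (-α))⁻¹ := if_neg hxy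
      rw [this, h2, ← ENNReal.ofReal_one, ← ENNReal.ofReal_add zero_le_one (by positivity),
        ← ENNReal.ofReal_inv_of_pos hpos]
  have hgm : Measurable g0 := by
    refine Measurable.ite ?_ measurable_const ?_
    · exact measurableSet_eq
    · exact (measurable_const.add (measurable_const.mul
        (((measurable_id.sub measurable_const).norm).pow measurable_const))).inv
  have hg0nonneg : ∀ x, 0 ≤ g0 x := by
    intro x
    by_cases hxy : x = y
    · simp [g0, hxy]
    · have hr : 0 < ‖x - y‖ := by rw [norm_pos_iff]; exact sub_ne_zero_of_ne hxy
      have : g0 x = (1 + s * ‖x - y‖ ^ (-α))⁻¹ := if_neg hxy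
      rw [this]; positivity
  have hg0le1 : ∀ x, g0 x ≤ 1 := by
    intro x
    by_cases hxy : x = y
    · simp [g0, hxy]
    · have hr : 0 < ‖x - y‖ := by rw [norm_pos_iff]; exact sub_ne_zero_of_ne hxy
      have : g0 x = (1 + s * ‖x - y‖ ^ (-α))⁻¹ := if_neg hxy
      rw [this]
      have h1 : (1:ℝ) ≤ 1 + s * ‖x - y‖ ^ (-α) := by
        have : 0 ≤ s * ‖x - y‖ ^ (-α) := by positivity
        linarith
      calc (1 + s * ‖x - y‖ ^ (-α))⁻¹ ≤ 1⁻¹ := by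
            apply inv_anti₀ one_pos h1
        _ = 1 := inv_one
  have hint : IntegrableOn g0 𝒜 volume := by
    refine Measure.integrableOn_of_bounded (M := 1) h𝒜fin.ne hgm.aestronglyMeasurable ?_
    · refine Filter.Eventually.of_forall fun x => ?_
      rw [Real.norm_eq_abs, abs_of_nonneg (hg0nonneg x)]
      exact hg0le1 x
  have hlint : ∫⁻ x in 𝒜, (1 + c x)⁻¹ ∂volume = ENNReal.ofReal (∫ x in 𝒜, g0 x) := by
    rw [show (fun x => (1 + c x)⁻¹) = fun x => ENNReal.ofReal (g0 x) from funext hgpt]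
    exact (ofReal_integral_eq_lintegral_ofReal hint
      (Filter.Eventually.of_forall fun x => hg0nonneg x)).symm
  set vA : ℝ := (volume 𝒜).toReal with hvAdef
  have hvA : 0 < vA := ENNReal.toReal_pos h𝒜pos.ne' h𝒜fin.ne
  set I : ℝ := ∫ x in 𝒜, g0 x with hIdef
  have hI0 : 0 ≤ I := setIntegral_nonneg h𝒜m fun x _ => hg0nonneg x
  have hq : q = ENNReal.ofReal (vA⁻¹ * I) := by
    rw [hqdef, hlint]
    have hV : (volume 𝒜)⁻¹ = ENNReal.ofReal vA⁻¹ := by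
      rw [ENNReal.ofReal_inv_of_pos hvA, hvAdef, ENNReal.ofReal_toReal h𝒜fin.ne]
    rw [hV, ← ENNReal.ofReal_mul (inv_nonneg.2 hvA.le)]
  set Λ : ℝ := lam * vA with hLdef
  set q' : ℝ := vA⁻¹ * I with hq'def
  have hq'0 : 0 ≤ q' := mul_nonneg (inv_nonneg.2 hvA.le) hI0
  have hterm : ∀ n : ℕ, ENNReal.ofReal (Λ ^ n * Real.exp (-Λ) / n.factorial) * q ^ n
      = ENNReal.ofReal (Real.exp (-Λ) * ((Λ * q') ^ n / n.factorial)) := by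
    intro n
    rw [hq, ← ENNReal.ofReal_pow hq'0, ← ENNReal.ofReal_mul (by positivity)]
    congr 1
    rw [mul_pow]
    ring
  simp_rw [hterm]
  have hsummable : Summable (fun n : ℕ => Real.exp (-Λ) * ((Λ * q') ^ n / n.factorial)) :=
    (Real.summable_pow_div_factorial (Λ * q')).mul_left _
  rw [← ENNReal.ofReal_tsum_of_nonneg (fun n => by positivity) hsummable]
  have htsum : ∑' n : ℕ, Real.exp (-Λ) * ((Λ * q') ^ n / n.factorial)
      = Real.exp (-Λ) * Real.exp (Λ * q') := by
    rw [tsum_mul_left]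
    congr 1
    rw [Real.exp_eq_exp_ℝ, NormedSpace.exp_eq_tsum_div]
  rw [htsum, ← Real.exp_add, ENNReal.toReal_ofReal (Real.exp_nonneg _)]
  congr 1
  have hF : (fun x => if x = y then (1:ℝ) else 1 - 1 / (1 + s * ‖x - y‖ ^ (-α)))
      = fun x => 1 - g0 x := by
    funext x
    by_cases hxy : x = y <;> simp [g0, hxy, one_div]
  have hintF : ∫ x in 𝒜, (if x = y then (1:ℝ) else 1 - 1 / (1 + s * ‖x - y‖ ^ (-α))) = vA - I := by
    rw [show (fun x => if x = y then (1:ℝ) else 1 - 1 / (1 + s * ‖x - y‖ ^ (-α)))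
      = fun x => 1 - g0 x from hF]
    rw [integral_sub (integrableOn_const h𝒜fin.ne : IntegrableOn (fun _ => (1:ℝ)) 𝒜 volume) hint]
    simp [hvAdef, Measure.real, hIdef]
  rw [hintF]
  have hΛq' : Λ * q' = lam * I := by
    rw [hLdef, hq'def]
    field_simp
  rw [hΛq']
  ring
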